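/- arXiv:2404.14126 — 2 statements merged into one kernel-verified Lean document; each statement's English description precedes it below -/
import Mathlib

section
/- The (n+1)-ary Koszul bracket b_{n+1}(e^{(1)},…,e^{(n+1)}) = Σ_{r=1}^{n+1} (−1)^{n−r+1} L_{R(ê[r])} e^{(r)} − (1/(n−1)!) d(R(e^{(1)},…,e^{(n+1)})) associated to an (n+1)-vector field R is totally antisymmetric in its n+1 arguments. -/
open scoped BigOperators

noncomputable section

/-- Points of the local chart. -/
abbrev Pt (d : ℕ) := Fin d → ℝ

/-- Partial derivative `∂_i f` at `x`. -/
def pd {d : ℕ} (i : Fin d) (f : Pt d → ℝ) (x : Pt d) : ℝ :=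
  fderiv ℝ f x (Pi.single i 1)

/-- Lie derivative of a 1-form `e` along a vector field `X`:
`(L_X e)_μ = X^ν ∂_ν e_μ + e_ν ∂_μ X^ν`. -/
def lieD {d : ℕ} (X e : Pt d → Fin d → ℝ) : Pt d → Fin d → ℝ :=
  fun x μ => ∑ ν, (X x ν * pd ν (fun y => e y μ) x + e x ν * pd μ (fun y => X y ν) x)

/-- Action of a vector field on a function, `X f = X^ν ∂_ν f`. -/
def act {d : ℕ} (X : Pt d → Fin d → ℝ) (f : Pt d → ℝ) (x : Pt d) : ℝ :=
  ∑ ν, X x ν * pd ν f x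

/-- The vector field `Π(e)`, `(Π(e))^ν = Π^{μν} e_μ`. -/
def sharp {d : ℕ} (P : Pt d → Fin d → Fin d → ℝ) (e : Pt d → Fin d → ℝ) :
    Pt d → Fin d → ℝ :=
  fun x ν => ∑ μ, P x μ ν * e x μ

/-- Full contraction `Π(e,e') = Π^{μν} e_μ e'_ν`. -/
def pairP {d : ℕ} (P : Pt d → Fin d → Fin d → ℝ) (e e' : Pt d → Fin d → ℝ) :
    Pt d → ℝ :=
  fun x => ∑ μ, ∑ ν, P x μ ν * e x μ * e' x ν

/-- The Koszul bracket `b₂(e,e') = L_{Π(e)}e' − L_{Π(e')}e − d(Π(e,e'))`. -/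
def kb {d : ℕ} (P : Pt d → Fin d → Fin d → ℝ) (e e' : Pt d → Fin d → ℝ) :
    Pt d → Fin d → ℝ :=
  fun x μ => lieD (sharp P e) e' x μ - lieD (sharp P e') e x μ - pd μ (pairP P e e') x

/-- Interior product with the de Rham differential: `(ι_X de)_μ = X^ν(∂_ν e_μ − ∂_μ e_ν)`. -/
def iotaD {d : ℕ} (X e : Pt d → Fin d → ℝ) : Pt d → Fin d → ℝ :=
  fun x μ => ∑ ν, X x ν * (pd ν (fun y => e y μ) x - pd μ (fun y => e y ν) x)

/-- The de Rham differential of a function, as a 1-form. -/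
def dF {d : ℕ} (f : Pt d → ℝ) : Pt d → Fin d → ℝ := fun x μ => pd μ f x

/-- The anchor map of the `(n+1)`-vector `R` on decomposable `n`-forms:
`R(e₁∧…∧eₙ)^ν = R^{μ₁…μₙν} e₁_{μ₁}…eₙ_{μₙ}`. -/
def Rc {d n : ℕ} (R : Pt d → (Fin (n+1) → Fin d) → ℝ)
    (f : Fin n → (Pt d → Fin d → ℝ)) : Pt d → Fin d → ℝ :=
  fun x ν => ∑ μ : Fin n → Fin d, R x (Fin.snoc μ ν) * ∏ i, f i x (μ i)

/-- Full contraction `R(e^{(1)},…,e^{(n+1)}) = R^{μ₁…μ_{n+1}} e^{(1)}_{μ₁}…e^{(n+1)}_{μ_{n+1}}`. -/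
def Rfull {d n : ℕ} (R : Pt d → (Fin (n+1) → Fin d) → ℝ)
    (e : Fin (n+1) → (Pt d → Fin d → ℝ)) : Pt d → ℝ :=
  fun x => ∑ μ : Fin (n+1) → Fin d, R x μ * ∏ i, e i x (μ i)

/-- Total antisymmetry of the component functions of a multivector field. -/
def Antisym {d m : ℕ} (R : Pt d → (Fin m → Fin d) → ℝ) : Prop :=
  ∀ (x : Pt d) (σ : Equiv.Perm (Fin m)) (μ : Fin m → Fin d),
    R x (μ ∘ σ) = ((Equiv.Perm.sign σ : ℤ) : ℝ) * R x μ

/-- Smoothness of (the components of) a 1-form. -/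
def SmForm {d : ℕ} (e : Pt d → Fin d → ℝ) : Prop := ∀ μ, ContDiff ℝ (⊤ : ℕ∞) (fun x => e x μ)

/-- Smoothness of the components of a multivector field. -/
def SmMV {d m : ℕ} (R : Pt d → (Fin m → Fin d) → ℝ) : Prop :=
  ∀ μ, ContDiff ℝ (⊤ : ℕ∞) (fun x => R x μ)

/-- The `(n+1)`-ary Koszul bracket of the `(n+1)`-vector `R`:
`b_{n+1}(e^{(1)},…,e^{(n+1)}) = Σ_r (−1)^{n−r+1} L_{R(ê[r])} e^{(r)} − (1/(n−1)!) d(R(e^{(1)},…,e^{(n+1)}))`. -/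
def bKos {d n : ℕ} (R : Pt d → (Fin (n+1) → Fin d) → ℝ)
    (e : Fin (n+1) → (Pt d → Fin d → ℝ)) : Pt d → Fin d → ℝ :=
  fun x μ =>
    (∑ r : Fin (n+1), (-1 : ℝ) ^ (n + r.val) * lieD (Rc R (e ∘ r.succAbove)) (e r) x μ)
      - ((n-1).factorial : ℝ)⁻¹ * pd μ (Rfull R e) x

/-! ### Auxiliary lemmas for the proof -/

section KoszulAux

variable {d n : ℕ}

lemma pd_pm_mul {s : ℝ} (hs : s = 1 ∨ s = -1) (f : Pt d → ℝ) (μ : Fin d) (x : Pt d) :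
    pd μ (fun y => s * f y) x = s * pd μ f x := by
  rcases hs with h | h <;> subst h
  · simp
  · have h1 : (fun y => (-1 : ℝ) * f y) = fun y => -(f y) := by funext y; ring
    unfold pd
    rw [h1, fderiv_fun_neg]
    simp

lemma pd_sum {ι : Type*} [Fintype ι] (f : ι → Pt d → ℝ) (μ : Fin d) (x : Pt d)
    (hf : ∀ i, DifferentiableAt ℝ (f i) x) :
    pd μ (fun y => ∑ i, f i y) x = ∑ i, pd μ (f i) x := by
  unfold pd
  rw [fderiv_fun_sum (fun i _ => hf i)]
  simp

lemma diffAt_prod {ι : Type*} (s : Finset ι) (F : ι → Pt d → ℝ)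
    (hF : ∀ i, ContDiff ℝ (⊤ : ℕ∞) (F i)) (x : Pt d) :
    DifferentiableAt ℝ (fun y => ∏ j ∈ s, F j y) x := by
  classical
  induction s using Finset.induction with
  | empty => simpa using differentiableAt_const (1 : ℝ)
  | @insert a t ha ih =>
      simp only [Finset.prod_insert ha]
      exact (((hF a).differentiable (by simp)).differentiableAt).mul ih

lemma diffAt_mul_prod {ι : Type*} (s : Finset ι)
    (g : Pt d → ℝ) (hg : ContDiff ℝ (⊤ : ℕ∞) g) (F : ι → Pt d → ℝ)
    (hF : ∀ i, ContDiff ℝ (⊤ : ℕ∞) (F i)) (x : Pt d) :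
    DifferentiableAt ℝ (fun y => g y * ∏ j ∈ s, F j y) x :=
  ((hg.differentiable (by simp)).differentiableAt).mul (diffAt_prod s F hF x)

lemma prod_succAbove' (r : Fin (n+1)) (h : Fin (n+1) → ℝ) :
    (∏ i : Fin n, h (r.succAbove i)) = ∏ j ∈ Finset.univ.erase r, h j := by
  refine Finset.prod_nbij (fun i => r.succAbove i) ?_ ?_ ?_ (fun a _ => rfl)
  · intro a _
    exact Finset.mem_erase.2 ⟨Fin.succAbove_ne r a, Finset.mem_univ _⟩
  · intro a _ b _ hab
    exact Fin.succAbove_right_injective hab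
  · intro b hb
    simp only [Finset.coe_erase, Finset.coe_univ, Set.mem_diff, Set.mem_singleton_iff] at hb
    obtain ⟨z, hz⟩ := Fin.exists_succAbove_eq hb.2
    exact ⟨z, by simp, hz⟩

lemma prod_erase_perm (σ : Equiv.Perm (Fin (n+1))) (r : Fin (n+1)) (h : Fin (n+1) → ℝ) :
    (∏ j ∈ Finset.univ.erase r, h (σ j)) = ∏ j ∈ Finset.univ.erase (σ r), h j := by
  refine Finset.prod_nbij (fun j => σ j) ?_ ?_ ?_ (fun a _ => rfl)
  · intro a ha
    exact Finset.mem_erase.2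
      ⟨fun hc => (Finset.mem_erase.1 ha).1 (σ.injective hc), Finset.mem_univ _⟩
  · intro a _ b _ hab
    exact σ.injective hab
  · intro b hb
    simp only [Finset.coe_erase, Finset.coe_univ, Set.mem_diff, Set.mem_singleton_iff] at hb
    refine ⟨σ⁻¹ b, ?_, by simp⟩
    simp only [Finset.coe_erase, Finset.coe_univ, Set.mem_diff, Set.mem_singleton_iff]
    exact ⟨trivial, fun hc => hb.2 (by rw [← hc]; simp)⟩

/-- The permutation sending `Fin.castSucc j ↦ r.succAbove j` and `Fin.last n ↦ r`. -/
def rhoP (r : Fin (n+1)) : Equiv.Perm (Fin (n+1)) := r.cycleRange⁻¹ * finRotate (n+1)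

lemma rhoP_castSucc (r : Fin (n+1)) (j : Fin n) :
    rhoP r (Fin.castSucc j) = r.succAbove j := by
  have h1 : finRotate (n+1) (Fin.castSucc j) = j.succ := by
    rw [finRotate_succ_apply, Fin.coeSucc_eq_succ]
  have h2 : r.cycleRange (r.succAbove j) = j.succ := Fin.cycleRange_succAbove r j
  simp only [rhoP, Equiv.Perm.mul_apply, h1, ← h2, Equiv.Perm.coe_inv, Equiv.symm_apply_apply]

lemma rhoP_last (r : Fin (n+1)) : rhoP r (Fin.last n) = r := by
  have h1 : finRotate (n+1) (Fin.last n) = 0 := finRotate_last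
  have h2 : r.cycleRange r = 0 := Fin.cycleRange_self r
  simp only [rhoP, Equiv.Perm.mul_apply, h1, ← h2, Equiv.Perm.coe_inv, Equiv.symm_apply_apply]

lemma comp_rhoP (r : Fin (n+1)) (κ : Fin (n+1) → Fin d) :
    (fun a => κ (rhoP r a)) = Fin.snoc (fun i => κ (r.succAbove i)) (κ r) := by
  funext a
  induction a using Fin.lastCases with
  | last => simp [rhoP_last]
  | cast j => simp [rhoP_castSucc]

lemma sign_rhoP (r : Fin (n+1)) :
    ((Equiv.Perm.sign (rhoP r) : ℤ) : ℝ) = (-1 : ℝ) ^ (n + r.val) := by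
  have h : Equiv.Perm.sign (rhoP r) = (-1) ^ (r.val + n) := by
    rw [rhoP, map_mul, map_inv, Fin.sign_cycleRange, sign_finRotate,
      Int.units_inv_eq_self, ← pow_add, Nat.add_sub_cancel]
  rw [h]
  push_cast
  rw [Nat.add_comm]

lemma neg_one_pow_pm (k : ℕ) : ((-1 : ℝ) ^ k = 1) ∨ ((-1 : ℝ) ^ k = -1) := by
  rcases Nat.even_or_odd k with h | h
  · exact Or.inl h.neg_one_pow
  · exact Or.inr h.neg_one_pow

lemma sign_pm (σ : Equiv.Perm (Fin (n+1))) :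
    (((Equiv.Perm.sign σ : ℤ) : ℝ) = 1) ∨ (((Equiv.Perm.sign σ : ℤ) : ℝ) = -1) := by
  rcases Int.units_eq_one_or (Equiv.Perm.sign σ) with h | h <;> rw [h] <;> simp

/-- The per-`(r,κ)` term of the Lie-derivative part of the Koszul bracket. -/
def Gt (R : Pt d → (Fin (n+1) → Fin d) → ℝ) (e : Fin (n+1) → (Pt d → Fin d → ℝ))
    (x : Pt d) (μ : Fin d) (r : Fin (n+1)) (κ : Fin (n+1) → Fin d) : ℝ :=
  R x κ * (∏ j ∈ Finset.univ.erase r, e j x (κ j)) * pd (κ r) (fun y => e r y μ) x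
  + e r x (κ r) * pd μ (fun y => R y κ * ∏ j ∈ Finset.univ.erase r, e j y (κ j)) x

lemma keyT (R : Pt d → (Fin (n+1) → Fin d) → ℝ) (hR : Antisym R) (hRsm : SmMV R)
    (e : Fin (n+1) → (Pt d → Fin d → ℝ)) (he : ∀ i, SmForm (e i))
    (r : Fin (n+1)) (x : Pt d) (μ : Fin d) :
    (-1 : ℝ) ^ (n + r.val) * lieD (Rc R (e ∘ r.succAbove)) (e r) x μ
      = ∑ κ : Fin (n+1) → Fin d, Gt R e x μ r κ := by
  set s : ℝ := (-1 : ℝ) ^ (n + r.val) with hs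
  have hspm : s = 1 ∨ s = -1 := neg_one_pow_pm _
  have hss : s * s = 1 := by rcases hspm with h | h <;> rw [h] <;> norm_num
  -- the basic antisymmetry consequence
  have hsnoc : ∀ (y : Pt d) (κ : Fin (n+1) → Fin d),
      R y (Fin.snoc (fun i => κ (r.succAbove i)) (κ r)) = s * R y κ := by
    intro y κ
    rw [← comp_rhoP r κ]
    have := hR y (rhoP r) κ
    rw [sign_rhoP r] at this
    exact this
  -- Step A: expand the Lie derivative into a double sum
  have stepA : lieD (Rc R (e ∘ r.succAbove)) (e r) x μ
      = ∑ ν : Fin d, ∑ w : Fin n → Fin d,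
          (R x (Fin.snoc w ν) * (∏ i : Fin n, e (r.succAbove i) x (w i))
              * pd ν (fun y => e r y μ) x
            + e r x ν * pd μ
                (fun y => R y (Fin.snoc w ν) * ∏ i : Fin n, e (r.succAbove i) y (w i)) x) := by
    unfold lieD Rc
    refine Finset.sum_congr rfl fun ν _ => ?_
    have hdiff : ∀ w : Fin n → Fin d, DifferentiableAt ℝ
        (fun y => R y (Fin.snoc w ν) * ∏ i : Fin n, (e ∘ r.succAbove) i y (w i)) x := by
      intro w
      exact diffAt_mul_prod Finset.univ _ (hRsm _) _ (fun i => he (r.succAbove i) (w i)) x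
    rw [pd_sum _ μ x hdiff, Finset.mul_sum, Finset.sum_mul, ← Finset.sum_add_distrib]
    refine Finset.sum_congr rfl fun w _ => ?_
    simp [Function.comp]
  -- Step B: reindex the double sum by κ and identify each term
  have stepB : ∀ (ν : Fin d) (w : Fin n → Fin d),
      s * (R x (Fin.snoc w ν) * (∏ i : Fin n, e (r.succAbove i) x (w i))
            * pd ν (fun y => e r y μ) x
          + e r x ν * pd μ
              (fun y => R y (Fin.snoc w ν) * ∏ i : Fin n, e (r.succAbove i) y (w i)) x)
      = Gt R e x μ r (Fin.insertNth r ν w) := by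
    intro ν w
    set κ : Fin (n+1) → Fin d := Fin.insertNth r ν w with hκ
    have hκr : κ r = ν := by simp [hκ]
    have hκs : ∀ i, κ (r.succAbove i) = w i := by intro i; simp [hκ]
    have hw : w = fun i => κ (r.succAbove i) := by funext i; rw [hκs i]
    have hRs : ∀ y : Pt d, R y (Fin.snoc w ν) = s * R y κ := by
      intro y
      rw [hw, ← hκr]
      exact hsnoc y κ
    have hprod : ∀ y : Pt d,
        (∏ i : Fin n, e (r.succAbove i) y (w i))
          = ∏ j ∈ Finset.univ.erase r, e j y (κ j) := by
      intro y
      rw [hw]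
      exact prod_succAbove' r (fun j => e j y (κ j))
    have hfun : (fun y => R y (Fin.snoc w ν) * ∏ i : Fin n, e (r.succAbove i) y (w i))
        = fun y => s * (R y κ * ∏ j ∈ Finset.univ.erase r, e j y (κ j)) := by
      funext y
      rw [hRs y, hprod y]
      ring
    rw [hfun, pd_pm_mul hspm, hRs x, hprod x]
    simp only [Gt, hκr]
    rcases hspm with h | h <;> rw [h] <;> ring
  -- assemble
  rw [stepA, Finset.mul_sum]
  calc ∑ ν : Fin d, s * ∑ w : Fin n → Fin d,
        (R x (Fin.snoc w ν) * (∏ i : Fin n, e (r.succAbove i) x (w i))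
            * pd ν (fun y => e r y μ) x
          + e r x ν * pd μ
              (fun y => R y (Fin.snoc w ν) * ∏ i : Fin n, e (r.succAbove i) y (w i)) x)
      = ∑ p : Fin d × (Fin n → Fin d), Gt R e x μ r (Fin.insertNth r p.1 p.2) := by
        rw [Fintype.sum_prod_type]
        refine Finset.sum_congr rfl fun ν _ => ?_
        rw [Finset.mul_sum]
        exact Finset.sum_congr rfl fun w _ => stepB ν w
    _ = ∑ κ : Fin (n+1) → Fin d, Gt R e x μ r κ :=
        Fintype.sum_equiv (Fin.insertNthEquiv (fun _ => Fin d) r) _ _ (fun p => rfl)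

lemma sum_precomp (σ : Equiv.Perm (Fin (n+1))) (f : (Fin (n+1) → Fin d) → ℝ) :
    ∑ κ : Fin (n+1) → Fin d, f (fun i => κ (σ⁻¹ i))
      = ∑ κ : Fin (n+1) → Fin d, f κ :=
  Fintype.sum_bijective (fun κ => fun i => κ (σ⁻¹ i))
    (Equiv.piCongrLeft' (fun _ => Fin d) σ).bijective _ _ (fun _ => rfl)

lemma prod_inv_reindex (σ : Equiv.Perm (Fin (n+1))) (κ : Fin (n+1) → Fin d)
    (e : Fin (n+1) → (Pt d → Fin d → ℝ)) (y : Pt d) :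
    (∏ i : Fin (n+1), e (σ i) y (κ i)) = ∏ i : Fin (n+1), e i y (κ (σ⁻¹ i)) := by
  have h := Equiv.prod_comp σ (fun i => e i y (κ (σ⁻¹ i)))
  simpa using h

lemma R_inv_reindex (R : Pt d → (Fin (n+1) → Fin d) → ℝ) (hR : Antisym R)
    (σ : Equiv.Perm (Fin (n+1))) (κ : Fin (n+1) → Fin d) (y : Pt d) :
    R y κ = ((Equiv.Perm.sign σ : ℤ) : ℝ) * R y (fun i => κ (σ⁻¹ i)) := by
  have h := hR y σ (fun i => κ (σ⁻¹ i))
  rw [show ((fun i => κ (σ⁻¹ i)) ∘ ⇑σ) = κ from by funext j; simp [Function.comp]] at h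
  exact h

lemma Rfull_perm (R : Pt d → (Fin (n+1) → Fin d) → ℝ) (hR : Antisym R)
    (e : Fin (n+1) → (Pt d → Fin d → ℝ)) (σ : Equiv.Perm (Fin (n+1))) (y : Pt d) :
    Rfull R (e ∘ ⇑σ) y = ((Equiv.Perm.sign σ : ℤ) : ℝ) * Rfull R e y := by
  unfold Rfull
  rw [Finset.mul_sum, ← sum_precomp σ
    (fun κ => ((Equiv.Perm.sign σ : ℤ) : ℝ) * (R y κ * ∏ i, e i y (κ i)))]
  refine Finset.sum_congr rfl fun κ _ => ?_
  simp only [Function.comp_apply]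
  rw [R_inv_reindex R hR σ κ y, prod_inv_reindex σ κ e y]
  ring

lemma Gt_perm (R : Pt d → (Fin (n+1) → Fin d) → ℝ) (hR : Antisym R)
    (e : Fin (n+1) → (Pt d → Fin d → ℝ)) (σ : Equiv.Perm (Fin (n+1)))
    (x : Pt d) (μ : Fin d) (r : Fin (n+1)) (κ : Fin (n+1) → Fin d) :
    Gt R (e ∘ ⇑σ) x μ r κ
      = ((Equiv.Perm.sign σ : ℤ) : ℝ) * Gt R e x μ (σ r) (fun i => κ (σ⁻¹ i)) := by
  have hspm := sign_pm σ
  have hprod : ∀ y : Pt d,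
      (∏ j ∈ Finset.univ.erase r, e (σ j) y (κ j))
        = ∏ j ∈ Finset.univ.erase (σ r), e j y (κ (σ⁻¹ j)) := by
    intro y
    have h := prod_erase_perm σ r (fun j => e j y (κ (σ⁻¹ j)))
    simpa using h
  have hfun : (fun y => R y κ * ∏ j ∈ Finset.univ.erase r, e (σ j) y (κ j))
      = fun y => ((Equiv.Perm.sign σ : ℤ) : ℝ) *
          (R y (fun i => κ (σ⁻¹ i)) *
            ∏ j ∈ Finset.univ.erase (σ r), e j y (κ (σ⁻¹ j))) := by
    funext y
    rw [hprod y, R_inv_reindex R hR σ κ y]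
    ring
  simp only [Gt, Function.comp_apply, (Equiv.Perm.inv_eq_iff_eq.2 rfl : σ⁻¹ (σ r) = r)]
  rw [hprod x, R_inv_reindex R hR σ κ x, hfun, pd_pm_mul hspm]
  rcases hspm with h | h <;> rw [h] <;> ring

lemma T_perm (R : Pt d → (Fin (n+1) → Fin d) → ℝ) (hR : Antisym R)
    (e : Fin (n+1) → (Pt d → Fin d → ℝ)) (σ : Equiv.Perm (Fin (n+1)))
    (x : Pt d) (μ : Fin d) :
    (∑ r : Fin (n+1), ∑ κ : Fin (n+1) → Fin d, Gt R (e ∘ ⇑σ) x μ r κ)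
      = ((Equiv.Perm.sign σ : ℤ) : ℝ)
          * ∑ r : Fin (n+1), ∑ κ : Fin (n+1) → Fin d, Gt R e x μ r κ := by
  calc ∑ r : Fin (n+1), ∑ κ : Fin (n+1) → Fin d, Gt R (e ∘ ⇑σ) x μ r κ
      = ∑ r : Fin (n+1), ∑ κ : Fin (n+1) → Fin d,
          ((Equiv.Perm.sign σ : ℤ) : ℝ) * Gt R e x μ (σ r) (fun i => κ (σ⁻¹ i)) :=
        Finset.sum_congr rfl fun r _ => Finset.sum_congr rfl fun κ _ =>
          Gt_perm R hR e σ x μ r κ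
    _ = ∑ r : Fin (n+1), ((Equiv.Perm.sign σ : ℤ) : ℝ)
          * ∑ κ : Fin (n+1) → Fin d, Gt R e x μ (σ r) κ := by
        refine Finset.sum_congr rfl fun r _ => ?_
        rw [← Finset.mul_sum]
        congr 1
        exact sum_precomp σ (fun κ => Gt R e x μ (σ r) κ)
    _ = ((Equiv.Perm.sign σ : ℤ) : ℝ)
          * ∑ r : Fin (n+1), ∑ κ : Fin (n+1) → Fin d, Gt R e x μ r κ := by
        rw [← Finset.mul_sum]
        congr 1
        exact Equiv.sum_comp σ (fun r => ∑ κ : Fin (n+1) → Fin d, Gt R e x μ r κ)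

end KoszulAux


/-- the `(n+1)`-ary Koszul bracket associated to an antisymmetric
`(n+1)`-vector field `R` is totally antisymmetric in its `n+1` arguments. -/
theorem higher_koszul_antisym {d n : ℕ} (hn : 1 ≤ n)
    (R : Pt d → (Fin (n+1) → Fin d) → ℝ)
    (hR : Antisym R) (hRsm : SmMV R)
    (e : Fin (n+1) → (Pt d → Fin d → ℝ)) (he : ∀ i, SmForm (e i)) :
    ∀ (σ : Equiv.Perm (Fin (n+1))) (x : Pt d) (μ : Fin d),
      bKos R (e ∘ σ) x μ = ((Equiv.Perm.sign σ : ℤ) : ℝ) * bKos R e x μ := by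
  intro σ x μ
  have hspm := sign_pm σ
  have hT1 : ∀ (f : Fin (n+1) → (Pt d → Fin d → ℝ)), (∀ i, SmForm (f i)) →
      (∑ r : Fin (n+1), (-1 : ℝ) ^ (n + r.val)
          * lieD (Rc R (f ∘ r.succAbove)) (f r) x μ)
        = ∑ r : Fin (n+1), ∑ κ : Fin (n+1) → Fin d, Gt R f x μ r κ :=
    fun f hf => Finset.sum_congr rfl fun r _ => keyT R hR hRsm f hf r x μ
  have hRf : pd μ (Rfull R (e ∘ ⇑σ)) x
      = ((Equiv.Perm.sign σ : ℤ) : ℝ) * pd μ (Rfull R e) x := by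
    have h1 : Rfull R (e ∘ ⇑σ)
        = fun y => ((Equiv.Perm.sign σ : ℤ) : ℝ) * Rfull R e y :=
      funext fun y => Rfull_perm R hR e σ y
    rw [h1, pd_pm_mul hspm]
  unfold bKos
  rw [hT1 (e ∘ ⇑σ) (fun i => he (σ i)), hT1 e he, T_perm R hR e σ x μ, hRf]
  ring
end
end

section
/- The E_n-polytorsion T^{∇^{E_n}}(e^{(1)},…,e^{(n+1)}) = Σ_{r=1}^{n+1} (−1)^{n−r+1} ∇^{E_n}_{ê[r]} e^{(r)} − b_{n+1}(e^{(1)},…,e^{(n+1)}) is C^∞(M)-linear in each argument: T^{∇^{E_n}}(e^{(1)},…,f e^{(r)},…,e^{(n+1)}) = f T^{∇^{E_n}}(e^{(1)},…,e^{(n+1)}) for every smooth function f. -/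
/-- The `E_n`-polytorsion of an `E_n`-connection `D` on the bundle of 1-forms,
`T^{∇^{E_n}}(e^{(1)},…,e^{(n+1)}) = Σ_r (−1)^{n−r+1} ∇^{E_n}_{ê[r]} e^{(r)} − b_{n+1}(e^{(1)},…,e^{(n+1)})`,
with `ê[r]` the decomposable `n`-form obtained by deleting the `r`-th argument. -/
def polyTorsion {Ω : Type*} [AddCommGroup Ω] (n : ℕ)
    (D : (Fin n → Ω) → Ω → Ω) (bN : (Fin (n+1) → Ω) → Ω)
    (e : Fin (n+1) → Ω) : Ω :=
  (∑ r : Fin (n+1), ((-1 : ℤ) ^ (n + r.val)) • D (e ∘ r.succAbove) (e r)) - bN e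

/-- the `E_n`-polytorsion is `C^∞(M)`-linear in each of its arguments:
`T^{∇^{E_n}}(e^{(1)},…,f e^{(r)},…,e^{(n+1)}) = f T^{∇^{E_n}}(e^{(1)},…,e^{(n+1)})`.
Sections of `T*M` are modelled as a module `Ω` over the algebra `A = C^∞(M)`;
`D` is an `E_n`-connection on `T*M` (anchored by `Ranc`), and `bN` is the totally
antisymmetric `(n+1)`-ary Koszul bracket with its Leibniz rule. -/
theorem polytorsion_tensorial (n : ℕ) (hn : 1 ≤ n)
    (A : Type*) [CommRing A]
    (Ω : Type*) [AddCommGroup Ω] [Module A Ω]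
    (Ranc : (Fin n → Ω) → A → A)
    (D : (Fin n → Ω) → Ω → Ω)
    (bN : (Fin (n+1) → Ω) → Ω)
    -- the E_n-connection axioms
    (hD_lin : ∀ (eh : Fin n → Ω) (i : Fin n) (f : A) (e : Ω),
      D (Function.update eh i (f • eh i)) e = f • D eh e)
    (hD_Lei : ∀ (eh : Fin n → Ω) (f : A) (e : Ω),
      D eh (f • e) = f • D eh e + (Ranc eh f) • e)
    -- bN is totally antisymmetric
    (hbN_alt : ∀ (σ : Equiv.Perm (Fin (n+1))) (e : Fin (n+1) → Ω),
      bN (e ∘ σ) = ((Equiv.Perm.sign σ : ℤ)) • bN e)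
    -- Leibniz rule of the (n+1)-ary Koszul bracket, in each slot
    (hbN_Lei : ∀ (e : Fin (n+1) → Ω) (i : Fin (n+1)) (f : A),
      bN (Function.update e i (f • e i))
        = f • bN e + ((-1 : ℤ) ^ (n + i.val)) • ((Ranc (e ∘ i.succAbove) f) • e i)) :
    ∀ (e : Fin (n+1) → Ω) (i : Fin (n+1)) (f : A),
      polyTorsion n D bN (Function.update e i (f • e i))
        = f • polyTorsion n D bN e := by
  intro e i f
  have hsum : ∀ r : Fin (n+1),
      ((-1 : ℤ) ^ (n + r.val)) • D ((Function.update e i (f • e i)) ∘ r.succAbove)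
          ((Function.update e i (f • e i)) r)
      = f • (((-1 : ℤ) ^ (n + r.val)) • D (e ∘ r.succAbove) (e r))
        + (if r = i then ((-1 : ℤ) ^ (n + i.val)) • ((Ranc (e ∘ i.succAbove) f) • e i) else 0) := by
    intro r
    by_cases h : r = i
    · subst h
      have hcomp : (Function.update e r (f • e r)) ∘ r.succAbove = e ∘ r.succAbove := by
        funext j
        simp [Function.update_of_ne (Fin.succAbove_ne r j)]
      rw [hcomp, Function.update_self, hD_Lei, smul_add, smul_comm, if_pos rfl]
    · have hir : i ≠ r := fun h' => h h'.symm
      obtain ⟨j, hj⟩ := Fin.exists_succAbove_eq hir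
      have hcomp : (Function.update e i (f • e i)) ∘ r.succAbove
          = Function.update (e ∘ r.succAbove) j (f • (e ∘ r.succAbove) j) := by
        rw [← hj]
        exact Function.update_comp_eq_of_injective e Fin.succAbove_right_injective j
          (f • e (r.succAbove j))
      rw [hcomp, Function.update_of_ne h, hD_lin, if_neg h, add_zero, smul_comm]
  unfold polyTorsion
  rw [hbN_Lei e i f]
  simp only [hsum]
  rw [Finset.sum_add_distrib, Finset.sum_ite_eq' Finset.univ i, if_pos (Finset.mem_univ i),
    ← Finset.smul_sum]
  rw [smul_sub]
  abel
end
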